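/- Let δ be a locally nilpotent q-skew σ-derivation on a k-algebra R, a ∈ R with N = nildeg(a), and n > N. If m > dn/(n−N) for some d ≥ 1, then for all indices i_1,…,i_{m−1} ∈ {0,…,n} with i_1 + ⋯ + i_{m−1} = (d−1)n, the iterated product a·F_{i_{m−1}}(a·F_{i_{m−2}}(⋯a·F_{i_1}(a)⋯)) = 0, where F_i(a) = [n choose i]_q σ^i(δ^{n−i}(a)). Consequently the coefficient of x^{dn} in (a xⁿ)^m vanishes: ((a xⁿ)^m)_{dn} = 0. -/

import Mathlib

/-- The Gaussian (q-)binomial coefficient `[n choose i]_q`. -/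
def qBinom {k : Type*} [Field k] (q : k) : ℕ → ℕ → k
  | _, 0 => 1
  | 0, _ + 1 => 0
  | n + 1, i + 1 => qBinom q n i + q ^ (i + 1) * qBinom q n (i + 1)

/-- The nested product `a·F_{i_{m−1}}(a·F_{i_{m−2}}(⋯ a·F_{i_1}(a)⋯))`. -/
def nestProd {R : Type*} [Ring R] (a : R) (F : ℕ → R → R) : List ℕ → R
  | [] => a
  | i :: t => a * F i (nestProd a F t)

/-- The nilpotency degree: the least `N` with `δ^[N] a = 0`. -/
noncomputable def nildeg {R : Type*} [Ring R] (δ : R → R) (a : R) : ℕ :=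
  sInf {N : ℕ | δ^[N] a = 0}

/-!
Since `σ` commutes with `δ` up to the scalar `q`, `δ^K (F_i b)` is a multiple of
`σ^i (δ^(K + n - i) b)`, and the `q`-Leibniz rule gives `δ^K (a * b) = 0` as soon as
`δ^p a = 0` or `δ^r b = 0` for every split `p + r = K`. Starting from `δ^N a = 0` this propagates
through the iterated product: a product of `m` factors `a` with index sum `j - n` is killed by
`δ^K` whenever `m N + j ≤ K + m n`; for `j = d n` and `K = 0` this is the hypothesis
`m (n - N) > d n`. The coefficients of `(a xⁿ)^m` obey the same bound, because moving `xⁿ` to the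
right with `xⁿ r = ∑ᵢ F_i(r) xⁱ` builds them from those of `(a xⁿ)^(m-1)` exactly as the iterated
products are built; uniqueness of coefficients identifies them with `p`.
-/

open Finset Function

theorem qBinom_eq_zero_of_lt {k : Type*} [Field k] (q : k) : ∀ {n i : ℕ}, n < i → qBinom q n i = 0
  | 0, _ + 1, _ => rfl
  | n + 1, i + 1, h => by
      rw [qBinom, qBinom_eq_zero_of_lt q (by omega), qBinom_eq_zero_of_lt q (by omega), mul_zero,
        add_zero]

@[simp]
theorem qBinom_zero_right {k : Type*} [Field k] (q : k) (n : ℕ) : qBinom q n 0 = 1 := by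
  cases n <;> rfl

theorem LinearMap.iterate_map_smul {k M : Type*} [Semiring k] [AddCommMonoid M] [Module k M]
    (f : M →ₗ[k] M) (p : ℕ) (c : k) (x : M) : f^[p] (c • x) = c • f^[p] x := by
  rw [← Module.End.pow_apply, map_smul, Module.End.pow_apply]

theorem iterate_eq_zero_of_le {M F : Type*} [AddMonoid M] [FunLike F M M] [AddMonoidHomClass F M M]
    (f : F) {x : M} {A K : ℕ} (hA : f^[A] x = 0) (hK : A ≤ K) : f^[K] x = 0 := by
  obtain ⟨B, rfl⟩ := Nat.exists_eq_add_of_le hK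
  rw [add_comm, iterate_add_apply, hA, iterate_map_zero]

section SkewDerivation

variable {k R : Type*} [Field k] [Ring R] [Algebra k R] (σ : R ≃ₐ[k] R) (δ : R →ₗ[k] R) (q : k)

/-- The operator `F_i` of the paper, for the exponent `n`. -/
def oreBinomTerm (n i : ℕ) (b : R) : R :=
  qBinom q n i • σ^[i] (δ^[n - i] b)

/-- The left coefficients of `a xⁿ · ∑ⱼ cⱼ xʲ`, by the commutation rule `pow_mul_map_eq_sum`. -/
noncomputable def monomialMulCoeffs (a : R) (n : ℕ) (c : ℕ →₀ R) : ℕ →₀ R :=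
  c.sum fun j r => ∑ i ∈ range (n + 1), Finsupp.single (i + j) (a * oreBinomTerm σ δ q n i r)

variable {σ δ q}

theorem oreBinomTerm_of_lt {ν i : ℕ} (h : ν < i) (r : R) : oreBinomTerm σ δ q ν i r = 0 := by
  simp [oreBinomTerm, qBinom_eq_zero_of_lt q h]

theorem oreBinomTerm_succ_zero (ν : ℕ) (r : R) :
    oreBinomTerm σ δ q (ν + 1) 0 r = δ (oreBinomTerm σ δ q ν 0 r) := by
  simp [oreBinomTerm, iterate_succ_apply']

variable (hq : ∀ a : R, q • σ (δ a) = δ (σ a))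
include hq

theorem iterate_delta_sigma (p : ℕ) (a : R) : δ^[p] (σ a) = q ^ p • σ (δ^[p] a) := by
  induction p generalizing a with
  | zero => simp
  | succ p ih =>
    rw [iterate_succ_apply, ← hq, LinearMap.iterate_map_smul, ih, smul_smul, ← pow_succ',
      iterate_succ_apply]

theorem iterate_delta_iterate_sigma (p i : ℕ) (a : R) :
    δ^[p] (σ^[i] a) = q ^ (p * i) • σ^[i] (δ^[p] a) := by
  induction i generalizing a with
  | zero => simp
  | succ i ih =>
    rw [iterate_succ_apply', iterate_delta_sigma hq, ih, map_smul, smul_smul, ← pow_add,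
      iterate_succ_apply', mul_add_one, add_comm]

theorem iterate_oreBinomTerm (n i r : ℕ) (b : R) :
    δ^[r] (oreBinomTerm σ δ q n i b)
      = (q ^ (r * i) * qBinom q n i) • σ^[i] (δ^[r + (n - i)] b) := by
  rw [oreBinomTerm, LinearMap.iterate_map_smul, iterate_delta_iterate_sigma hq, smul_smul,
    mul_comm, iterate_add_apply]

theorem oreBinomTerm_succ_succ (ν i : ℕ) (r : R) :
    oreBinomTerm σ δ q (ν + 1) (i + 1) r
      = σ (oreBinomTerm σ δ q ν i r) + δ (oreBinomTerm σ δ q ν (i + 1) r) := by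
  have hδ : δ (oreBinomTerm σ δ q ν (i + 1) r)
      = (q ^ (i + 1) * qBinom q ν (i + 1)) • σ^[i + 1] (δ^[ν - i] r) := by
    rcases lt_or_ge i ν with h | h
    · simpa [show 1 + (ν - (i + 1)) = ν - i by omega] using iterate_oreBinomTerm hq ν (i + 1) 1 r
    · simp [oreBinomTerm_of_lt (show ν < i + 1 by omega), qBinom_eq_zero_of_lt q
        (show ν < i + 1 by omega)]
  rw [hδ, oreBinomTerm, oreBinomTerm, qBinom, add_smul, map_smul, ← iterate_succ_apply' σ,
    Nat.add_sub_add_right]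

variable (hleib : ∀ a b : R, δ (a * b) = σ a * δ b + δ a * b)
include hleib

theorem iterate_mul_eq_zero {a b : R} {K : ℕ}
    (h : ∀ p r, p + r = K → δ^[p] a = 0 ∨ δ^[r] b = 0) : δ^[K] (a * b) = 0 := by
  induction K generalizing a b with
  | zero => rcases h 0 0 rfl with h | h <;> simp_all
  | succ K ih =>
    rw [iterate_succ_apply, hleib, iterate_map_add, ih, ih, add_zero]
    · exact fun p r hpr => h (p + 1) r (by omega)
    · refine fun p r hpr => (h p (r + 1) (by omega)).imp (fun hp => ?_) id
      rw [iterate_delta_sigma hq, hp, map_zero, smul_zero]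

-- `hb` says `δ^(B - C) b = 0`, phrased so that no truncated subtraction occurs.
theorem iterate_mul_oreBinomTerm_eq_zero {a b : R} {N n i B C K : ℕ} (ha : δ^[N] a = 0)
    (hi : i ≤ n) (hb : ∀ K', B ≤ K' + C → δ^[K'] b = 0) (hK : N + B + i ≤ K + C + n) :
    δ^[K] (a * oreBinomTerm σ δ q n i b) = 0 := by
  refine iterate_mul_eq_zero hq hleib fun p r hpr => ?_
  by_cases hp : N ≤ p
  · exact .inl (iterate_eq_zero_of_le δ ha hp)
  · right
    rw [iterate_oreBinomTerm hq, hb _ (by omega), iterate_map_zero, smul_zero]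

theorem iterate_nestProd_eq_zero {a : R} {N n : ℕ} (ha : δ^[N] a = 0) :
    ∀ {L : List ℕ}, (∀ i ∈ L, i ≤ n) → ∀ {K : ℕ},
      (L.length + 1) * N + (L.sum + n) ≤ K + (L.length + 1) * n →
      δ^[K] (nestProd a (oreBinomTerm σ δ q n) L) = 0
  | [], _, K, hK => iterate_eq_zero_of_le δ ha (by simp at hK; omega)
  | i :: t, hL, K, hK => by
    refine iterate_mul_oreBinomTerm_eq_zero hq hleib ha (hL i (by simp))
      (fun K' hK' => iterate_nestProd_eq_zero ha (fun j hj => hL j (by simp [hj])) hK') ?_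
    simp only [List.length_cons, List.sum_cons] at hK
    linarith

theorem iterate_monomialMulCoeffs_eq_zero {a : R} {N n M : ℕ} (ha : δ^[N] a = 0)
    {c : ℕ →₀ R} (hc : ∀ j K, M * N + j ≤ K + M * n → δ^[K] (c j) = 0) {t K : ℕ}
    (hK : (M + 1) * N + t ≤ K + (M + 1) * n) :
    δ^[K] (monomialMulCoeffs σ δ q a n c t) = 0 := by
  rw [monomialMulCoeffs, Finsupp.sum, Finsupp.finsetSum_apply, ← Module.End.pow_apply, map_sum]
  refine sum_eq_zero fun j _ => ?_
  rw [Finsupp.finsetSum_apply, map_sum]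
  refine sum_eq_zero fun i hi => ?_
  rw [Finsupp.single_apply]
  split_ifs with hij
  · rw [Module.End.pow_apply]
    exact iterate_mul_oreBinomTerm_eq_zero hq hleib ha (mem_range_succ_iff.1 hi) (hc j)
      (by rw [← hij] at hK; linarith)
  · exact map_zero _

end SkewDerivation

section OreExtension

variable {k R S : Type*} [Field k] [Ring R] [Algebra k R] [Ring S] [Algebra k S]
  {σ : R ≃ₐ[k] R} {δ : R →ₗ[k] R} {q : k} (φ : R →ₐ[k] S) (X : S)

noncomputable def ofCoeffs : (ℕ →₀ R) →+ S :=
  Finsupp.liftAddHom fun i => (AddMonoidHom.mulRight (X ^ i)).comp (φ : R →+* S).toAddMonoidHom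

theorem ofCoeffs_apply (c : ℕ →₀ R) : ofCoeffs φ X c = ∑ i ∈ c.support, φ (c i) * X ^ i := by
  rw [ofCoeffs, Finsupp.liftAddHom_apply]
  rfl

theorem ofCoeffs_single (i : ℕ) (r : R) : ofCoeffs φ X (Finsupp.single i r) = φ r * X ^ i := by
  rw [ofCoeffs, Finsupp.liftAddHom_apply_single]
  rfl

variable (hq : ∀ a : R, q • σ (δ a) = δ (σ a))
  (hrel : ∀ r : R, X * φ r = φ (σ r) * X + φ (δ r))
include hq hrel

theorem pow_mul_map_eq_sum (ν : ℕ) (r : R) :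
    X ^ ν * φ r = ∑ i ∈ range (ν + 1), φ (oreBinomTerm σ δ q ν i r) * X ^ i := by
  induction ν with
  | zero => simp [oreBinomTerm]
  | succ ν ih =>
    set g : ℕ → R := fun i => oreBinomTerm σ δ q ν i r with hg
    have hg_top : g (ν + 1) = 0 := oreBinomTerm_of_lt (Nat.lt_succ_self ν) r
    calc X ^ (ν + 1) * φ r = X * (X ^ ν * φ r) := by rw [pow_succ', mul_assoc]
      _ = ∑ i ∈ range (ν + 1), (φ (σ (g i)) * X ^ (i + 1) + φ (δ (g i)) * X ^ i) := by
        rw [ih, mul_sum]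
        refine sum_congr rfl fun i _ => ?_
        rw [← mul_assoc, hrel, add_mul, pow_succ', mul_assoc]
      _ = ∑ i ∈ range (ν + 1), φ (σ (g i) + δ (g (i + 1))) * X ^ (i + 1)
            + φ (δ (g 0)) * X ^ 0 := by
        simp only [map_add, add_mul, sum_add_distrib]
        rw [sum_range_succ' (fun i => φ (δ (g i)) * X ^ i),
          sum_range_succ (fun i => φ (δ (g (i + 1))) * X ^ (i + 1)), hg_top]
        simp only [map_zero, zero_mul, add_zero, add_assoc]
      _ = ∑ i ∈ range (ν + 2), φ (oreBinomTerm σ δ q (ν + 1) i r) * X ^ i := by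
        rw [sum_range_succ' _ (ν + 1), oreBinomTerm_succ_zero]
        simp only [hg, oreBinomTerm_succ_succ hq]

theorem ofCoeffs_monomialMulCoeffs (a : R) (n : ℕ) (c : ℕ →₀ R) :
    ofCoeffs φ X (monomialMulCoeffs σ δ q a n c) = φ a * X ^ n * ofCoeffs φ X c := by
  rw [ofCoeffs_apply φ X c, monomialMulCoeffs, Finsupp.sum, map_sum, mul_sum]
  refine sum_congr rfl fun j _ => ?_
  simp only [map_sum, ofCoeffs_single]
  rw [mul_assoc, ← mul_assoc (X ^ n), pow_mul_map_eq_sum φ X hq hrel, sum_mul, mul_sum]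
  refine sum_congr rfl fun i _ => ?_
  rw [map_mul, pow_add]
  simp only [mul_assoc]

theorem exists_ofCoeffs_eq_pow (hleib : ∀ a b : R, δ (a * b) = σ a * δ b + δ a * b)
    {a : R} {N n : ℕ} (ha : δ^[N] a = 0) (m : ℕ) :
    ∃ c : ℕ →₀ R, (φ a * X ^ n) ^ (m + 1) = ofCoeffs φ X c ∧
      ∀ j K, (m + 1) * N + j ≤ K + (m + 1) * n → δ^[K] (c j) = 0 := by
  induction m with
  | zero =>
    refine ⟨Finsupp.single n a, by rw [pow_one, ofCoeffs_single], fun j K hK => ?_⟩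
    rw [Finsupp.single_apply]
    split_ifs with hj
    · exact iterate_eq_zero_of_le δ ha (by omega)
    · exact iterate_map_zero δ K
  | succ m ih =>
    obtain ⟨c, hc, hcK⟩ := ih
    exact ⟨monomialMulCoeffs σ δ q a n c,
      by rw [pow_succ', hc, ofCoeffs_monomialMulCoeffs φ X hq hrel],
      fun j K hK => iterate_monomialMulCoeffs_eq_zero hq hleib ha hcK hK⟩

end OreExtension

theorem ore_coeff_vanishes_general {k : Type*} [Field k] {R : Type*} [Ring R] [Algebra k R]
    (σ : R ≃ₐ[k] R) (δ : R →ₗ[k] R)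
    (hleib : ∀ a b : R, δ (a * b) = σ a * δ b + δ a * b)
    (q : k)
    (hq : ∀ a : R, q • σ (δ a) = δ (σ a))
    (hln : ∀ a : R, ∃ n : ℕ, (⇑δ)^[n] a = 0)
    {S : Type*} [Ring S] [Algebra k S] (φ : R →ₐ[k] S)
    (X : S)
    (hbasis : ∀ s : S, ∃! p : ℕ →₀ R, s = ∑ i ∈ p.support, φ (p i) * X ^ i)
    (hrel : ∀ r : R, X * (φ r) = φ (σ r) * X + φ (δ r))
    (a : R) (N : ℕ) (hN : N = nildeg (⇑δ) a) (n : ℕ)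
    (d : ℕ) (hd : 1 ≤ d) (m : ℕ)
    (hmd : d * n < m * (n - N)) :
    (∀ ι : Fin (m - 1) → Fin (n + 1), (∑ j, (ι j : ℕ)) = (d - 1) * n →
      nestProd a (fun i b => qBinom q n i • (⇑σ)^[i] ((⇑δ)^[n - i] b))
        (List.ofFn (fun j => (ι j : ℕ))) = 0) ∧
    (∀ p : ℕ →₀ R, (φ a * X ^ n) ^ m = ∑ i ∈ p.support, φ (p i) * X ^ i →
      p (d * n) = 0) := by
  have ha : δ^[N] a = 0 := hN ▸ Nat.sInf_mem (hln a)
  obtain ⟨m, rfl⟩ : ∃ m', m = m' + 1 :=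
    Nat.exists_eq_add_one.2 (Nat.pos_of_ne_zero fun h => by simp [h] at hmd)
  have hbound : (m + 1) * N + d * n ≤ (m + 1) * n := by
    rw [Nat.mul_sub] at hmd
    omega
  refine ⟨fun ι hι => ?_, fun p hp => ?_⟩
  · have hdn : (d - 1) * n + n = d * n := by
      rw [← Nat.succ_mul, Nat.succ_eq_add_one, Nat.sub_add_cancel hd]
    refine iterate_nestProd_eq_zero hq hleib ha (K := 0) ?_ ?_
    · simp only [List.mem_ofFn, forall_exists_index]
      rintro _ j rfl
      exact Nat.lt_succ_iff.1 (ι j).isLt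
    · rw [List.sum_ofFn, hι, hdn, List.length_ofFn, Nat.add_sub_cancel]
      omega
  · obtain ⟨c, hc, hcK⟩ := exists_ofCoeffs_eq_pow φ X hq hrel hleib ha m
    obtain ⟨_, _, huniq⟩ := hbasis ((φ a * X ^ n) ^ (m + 1))
    rw [huniq p hp, ← huniq c (hc.trans (ofCoeffs_apply φ X c))]
    exact hcK (d * n) 0 (by rwa [zero_add])

/-- If `m > dn/(n−N)` (i.e. `m·(n−N) > d·n`), then every iterated product with
index sum `(d−1)·n` vanishes, and hence the coefficient of `x^{dn}` in `(a xⁿ)^m`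
is zero. -/
theorem ore_coeff_vanishes {k : Type*} [Field k] {R : Type*} [Ring R] [Algebra k R]
    (σ : R ≃ₐ[k] R) (δ : R →ₗ[k] R)
    (hleib : ∀ a b : R, δ (a * b) = σ a * δ b + δ a * b)
    (q : k) (hq0 : q ≠ 0)
    (hq : ∀ a : R, q • σ (δ a) = δ (σ a))
    (hln : ∀ a : R, ∃ n : ℕ, (⇑δ)^[n] a = 0)
    {S : Type*} [Ring S] [Algebra k S] (φ : R →ₐ[k] S) (hφ : Function.Injective φ)
    (X : S)
    (hbasis : ∀ s : S, ∃! p : ℕ →₀ R, s = ∑ i ∈ p.support, φ (p i) * X ^ i)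
    (hrel : ∀ r : R, X * (φ r) = φ (σ r) * X + φ (δ r))
    (a : R) (N : ℕ) (hN : N = nildeg (⇑δ) a) (n : ℕ) (hn : N < n)
    (d : ℕ) (hd : 1 ≤ d) (m : ℕ) (hm : 1 ≤ m)
    (hmd : d * n < m * (n - N)) :
    (∀ ι : Fin (m - 1) → Fin (n + 1), (∑ j, (ι j : ℕ)) = (d - 1) * n →
      nestProd a (fun i b => qBinom q n i • (⇑σ)^[i] ((⇑δ)^[n - i] b))
        (List.ofFn (fun j => (ι j : ℕ))) = 0) ∧
    (∀ p : ℕ →₀ R, (φ a * X ^ n) ^ m = ∑ i ∈ p.support, φ (p i) * X ^ i →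
      p (d * n) = 0) :=
  ore_coeff_vanishes_general σ δ hleib q hq hln φ X hbasis hrel a N hN n d hd m hmd
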